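/- arXiv:2602.17401 — 2 statements merged into one kernel-verified Lean document; each statement's English description precedes it below -/
import Mathlib

section
/- For every real c ≥ 17, F(c) < 2.88, where F(c) = inf over positive integers t of (t!)^{1/t} · 15^{c/t} / c. -/
open Filter

noncomputable section

/-- An `n × n` 0-1 matrix `A` contains the `k × k` pattern `P` if there are strictly
increasing rows and columns selecting a submatrix that dominates `P`. -/
def Contains {k n : ℕ} (P : Matrix (Fin k) (Fin k) Bool)
    (A : Matrix (Fin n) (Fin n) Bool) : Prop :=
  ∃ r : Fin k → Fin n, ∃ c : Fin k → Fin n,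
    StrictMono r ∧ StrictMono c ∧ ∀ i j, P i j = true → A (r i) (c j) = true

/-- `A` avoids the pattern `P`. -/
def Avoids {k n : ℕ} (P : Matrix (Fin k) (Fin k) Bool)
    (A : Matrix (Fin n) (Fin n) Bool) : Prop := ¬ Contains P A

/-- The permutation matrix of a permutation. -/
def permMatrix {n : ℕ} (σ : Equiv.Perm (Fin n)) : Matrix (Fin n) (Fin n) Bool :=
  fun i j => decide (σ i = j)

/-- `A` is a permutation matrix. -/
def IsPermMatrix {n : ℕ} (A : Matrix (Fin n) (Fin n) Bool) : Prop :=
  ∃ σ : Equiv.Perm (Fin n), A = permMatrix σ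

/-- Number of ones of a 0-1 matrix. -/
def numOnes {m n : ℕ} (A : Matrix (Fin m) (Fin n) Bool) : ℕ :=
  (Finset.univ.filter fun p : Fin m × Fin n => A p.1 p.2 = true).card

/-- `SW P n = S_P(n)`, the number of `n × n` permutation matrices avoiding `P`. -/
def SW {k : ℕ} (P : Matrix (Fin k) (Fin k) Bool) (n : ℕ) : ℕ :=
  Nat.card {A : Matrix (Fin n) (Fin n) Bool // IsPermMatrix A ∧ Avoids P A}

/-- `exFH P n = ex(n, P)`, the maximum number of ones in an `n × n` 0-1 matrix
avoiding `P`. -/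
def exFH {k : ℕ} (P : Matrix (Fin k) (Fin k) Bool) (n : ℕ) : ℕ :=
  sSup {m : ℕ | ∃ A : Matrix (Fin n) (Fin n) Bool, Avoids P A ∧ numOnes A = m}

/-- `F c = inf over positive integers t of (t!)^(1/t) * 15^(c/t) / c`. -/
def F (c : ℝ) : ℝ :=
  ⨅ t : ℕ+, ((t : ℕ).factorial : ℝ) ^ ((1 : ℝ) / (t : ℕ)) * (15 : ℝ) ^ (c / (t : ℕ)) / c

/-- The block (among `n` consecutive blocks of length `t`) containing a given
index of `Fin (t * n)`. -/
def blockOf {t n : ℕ} (ht : 0 < t) (i : Fin (t * n)) : Fin n :=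
  ⟨(i : ℕ) / t, by
    rw [Nat.div_lt_iff_lt_mul ht]
    exact lt_of_lt_of_le i.isLt (le_of_eq (mul_comm t n))⟩

/-- The `t`-contraction of an `(t*n) × (t*n)` 0-1 matrix: entry `(a,b)` is 1 iff
the block `I_a × I_b` contains a one. -/
def contMat {t n : ℕ} (ht : 0 < t) (A : Matrix (Fin (t * n)) (Fin (t * n)) Bool) :
    Matrix (Fin n) (Fin n) Bool :=
  fun a b => by classical exact decide (∃ i j, blockOf ht i = a ∧ blockOf ht j = b ∧ A i j = true)

end

/-!
For `t ≥ 1`, `F c < r` as soon as `t! * 15^c < (r c)^t`. For fixed `t` the set of `c > 0`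
satisfying this is convex, because `t log (r c) - c log 15` is concave in `c`; checking the
endpoints of `[17, 20]` with `t = 50` and of `[20, 25]` with `t = 61` settles `17 ≤ c ≤ 25`
(the margin at `c = 17` is small: `F 17 ≈ 2.8766`). For `c ≥ 25` take `t = ⌊3c⌋ + 1`: then
`15^c ≤ 2.47^t` and `2.88 c ≥ 0.96 (t - 1)`, and `t! * 2.47^t < (0.96 (t - 1))^t` for `t ≥ 75`
follows by induction, the step being `e ≤ (1 + 1/n)^(n+1)`.
-/

open Real Set
open scoped Nat

theorem F_lt_of_factorial_mul_rpow_lt {c r : ℝ} (hc : 0 < c) (hr : 0 ≤ r) {t : ℕ} (ht : 0 < t)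
    (h : (t ! : ℝ) * 15 ^ c < (r * c) ^ t) : F c < r := by
  have hroot : ((t ! : ℝ) ^ ((1 : ℝ) / t) * 15 ^ (c / t)) ^ t = (t ! : ℝ) * 15 ^ c := by
    have ht' : (t : ℝ) ≠ 0 := by positivity
    rw [mul_pow, one_div, rpow_inv_natCast_pow (by positivity) ht.ne', ← rpow_mul_natCast
      (by norm_num), div_mul_cancel₀ _ ht']
  calc F c ≤ (t ! : ℝ) ^ ((1 : ℝ) / t) * 15 ^ (c / t) / c :=
        ciInf_le ⟨0, by rintro _ ⟨s, rfl⟩; positivity⟩ (⟨t, ht⟩ : ℕ+)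
    _ < r := by
        rw [div_lt_iff₀ hc]
        exact lt_of_pow_lt_pow_left₀ t (by positivity) (hroot ▸ h)

theorem exp_one_mul_pow_le_succ_pow (n : ℕ) :
    exp 1 * (n : ℝ) ^ (n + 1) ≤ ((n : ℝ) + 1) ^ (n + 1) := by
  rcases n.eq_zero_or_pos with rfl | hn
  · simp
  have hn' : (0 : ℝ) < n := by exact_mod_cast hn
  have hlog : 1 ≤ ((n + 1 : ℕ) : ℝ) * log ((n + 1) / n) := by
    have := one_sub_inv_le_log_of_pos (x := ((n : ℝ) + 1) / n) (by positivity)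
    rw [inv_div, one_sub_div (by positivity), add_sub_cancel_left] at this
    push_cast
    rwa [div_le_iff₀' (by positivity)] at this
  calc exp 1 * (n : ℝ) ^ (n + 1)
      ≤ exp (((n + 1 : ℕ) : ℝ) * log ((n + 1) / n)) * (n : ℝ) ^ (n + 1) := by gcongr
    _ = ((n : ℝ) + 1) ^ (n + 1) := by
      rw [exp_nat_mul, exp_log (by positivity), ← mul_pow, div_mul_cancel₀ _ hn'.ne']

theorem convex_setOf_mul_rpow_lt_pow {K β γ : ℝ} (hK : 0 < K) (hβ : 0 < β) (hγ : 0 < γ)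
    (n : ℕ) : Convex ℝ {x : ℝ | 0 < x ∧ K * β ^ x < (γ * x) ^ n} := by
  have hconc : ConcaveOn ℝ (Ioi 0) fun x => n * log x - x * log β :=
    (strictConcaveOn_log_Ioi.concaveOn.smul (Nat.cast_nonneg n)).sub
      ((LinearMap.mulRight ℝ (log β)).convexOn (convex_Ioi 0))
  have hset : {x : ℝ | 0 < x ∧ K * β ^ x < (γ * x) ^ n} =
      {x ∈ Ioi 0 | log K - n * log γ < n * log x - x * log β} :=
    Set.ext fun x => and_congr_right fun hx => by
      rw [← log_lt_log_iff (by positivity) (by positivity), log_mul hK.ne' (by positivity),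
        log_rpow hβ, log_pow, log_mul hγ.ne' hx.ne']
      constructor <;> intro h <;> linarith
  exact hset ▸ hconc.convex_gt _

theorem factorial_mul_rpow_lt_of_mem_Icc {t : ℕ} {a b c : ℝ} (ha : 0 < a) (hc : c ∈ Icc a b)
    (hta : (t ! : ℝ) * 15 ^ a < (2.88 * a) ^ t) (htb : (t ! : ℝ) * 15 ^ b < (2.88 * b) ^ t) :
    (t ! : ℝ) * 15 ^ c < (2.88 * c) ^ t :=
  ((convex_setOf_mul_rpow_lt_pow (by positivity) (by norm_num) (by norm_num) t).ordConnected.out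
    ⟨ha, hta⟩ ⟨ha.trans_le (hc.1.trans hc.2), htb⟩ hc).2

theorem factorial_mul_pow_lt_of_le {n : ℕ} (hn : 74 ≤ n) :
    ((n + 1)! : ℝ) * 2.47 ^ (n + 1) < (0.96 * n) ^ (n + 1) := by
  induction n, hn using Nat.le_induction with
  | base => norm_num [Nat.factorial]
  | succ n hn ih =>
    have hn' : (74 : ℝ) ≤ n := by exact_mod_cast hn
    have he : (2.718 : ℝ) < exp 1 := lt_trans (by norm_num) exp_one_gt_d9
    have hstep : ((n : ℝ) + 2) * 2.47 ≤ 0.96 * ((n : ℝ) + 1) * exp 1 := by nlinarith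
    calc (((n + 1 + 1)! : ℕ) : ℝ) * 2.47 ^ (n + 1 + 1)
        = ((n : ℝ) + 2) * 2.47 * (((n + 1)! : ℝ) * 2.47 ^ (n + 1)) := by
          push_cast [Nat.factorial_succ, pow_succ]; ring
      _ < ((n : ℝ) + 2) * 2.47 * (0.96 * n) ^ (n + 1) := by gcongr
      _ ≤ 0.96 * ((n : ℝ) + 1) * exp 1 * (0.96 * n) ^ (n + 1) := by gcongr
      _ = 0.96 * ((n : ℝ) + 1) * 0.96 ^ (n + 1) * (exp 1 * (n : ℝ) ^ (n + 1)) := by ring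
      _ ≤ 0.96 * ((n : ℝ) + 1) * 0.96 ^ (n + 1) * ((n : ℝ) + 1) ^ (n + 1) := by
          gcongr; exact exp_one_mul_pow_le_succ_pow n
      _ = (0.96 * ((n + 1 : ℕ) : ℝ)) ^ (n + 1 + 1) := by push_cast; rw [mul_pow]; ring

theorem exists_factorial_mul_rpow_lt_of_ge {c : ℝ} (hc : 25 ≤ c) :
    ∃ t : ℕ, 0 < t ∧ (t ! : ℝ) * 15 ^ c < (2.88 * c) ^ t := by
  set n := ⌊3 * c⌋₊
  have hn : (n : ℝ) ≤ 3 * c := Nat.floor_le (by positivity)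
  have hn' : 3 * c < n + 1 := Nat.lt_floor_add_one _
  have h15 : (15 : ℝ) ^ c ≤ 2.47 ^ (n + 1) :=
    calc (15 : ℝ) ^ c ≤ 15 ^ ((3 : ℝ)⁻¹ * (n + 1 : ℕ)) := by
          gcongr
          · norm_num
          · push_cast; linarith
      _ = (15 ^ (3 : ℝ)⁻¹) ^ (n + 1) := rpow_mul_natCast (by norm_num) _ _
      _ ≤ 2.47 ^ (n + 1) := by
          gcongr
          rw [rpow_inv_le_iff_of_pos (by norm_num) (by norm_num) (by norm_num)]
          norm_num
  refine ⟨n + 1, n.succ_pos, ?_⟩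
  calc ((n + 1)! : ℝ) * 15 ^ c ≤ ((n + 1)! : ℝ) * 2.47 ^ (n + 1) := by gcongr
    _ < (0.96 * n) ^ (n + 1) :=
        factorial_mul_pow_lt_of_le (Nat.le_floor (by push_cast; linarith))
    _ ≤ (2.88 * c) ^ (n + 1) := pow_le_pow_left₀ (by positivity) (by linarith) _

theorem F_lt_288_of_ge_17 (c : ℝ) (hc : 17 ≤ c) : F c < 2.88 := by
  obtain ⟨t, ht, h⟩ : ∃ t : ℕ, 0 < t ∧ (t ! : ℝ) * 15 ^ c < (2.88 * c) ^ t := by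
    rcases le_or_gt c 20 with h20 | h20
    · exact ⟨50, by norm_num, factorial_mul_rpow_lt_of_mem_Icc (a := 17) (b := 20) (by norm_num)
        ⟨hc, h20⟩ (by norm_num [Nat.factorial]) (by norm_num [Nat.factorial])⟩
    rcases le_or_gt c 25 with h25 | h25
    · exact ⟨61, by norm_num, factorial_mul_rpow_lt_of_mem_Icc (a := 20) (b := 25) (by norm_num)
        ⟨h20.le, h25⟩ (by norm_num [Nat.factorial]) (by norm_num [Nat.factorial])⟩
    exact exists_factorial_mul_rpow_lt_of_ge h25.le
  exact F_lt_of_factorial_mul_rpow_lt (by linarith) (by norm_num) ht h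
end

section
/- The function G(c) = (3/e) · 15^{1/3} · (6πc)^{1/(6c)} · e^{1/(108c²)} is strictly decreasing on the interval [1, ∞). -/
/-!
Both factors of `G` that depend on `c` are strictly decreasing and positive. The exponential one
is obvious; for the other, `(6πc)^(1/(6c)) = exp (π · log u / u)` with `u = 6πc ≥ 6π > e`, and
`log u / u` is strictly decreasing past `e` because `log (v / u) < v / u - 1 ≤ log u · (v / u - 1)`.
-/

open Filter

/-- `G c = (3/e) * 15^(1/3) * (6 pi c)^(1/(6c)) * e^(1/(108 c^2))`. -/
noncomputable def G (c : ℝ) : ℝ :=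
  3 / Real.exp 1 * (15 : ℝ) ^ ((1 : ℝ) / 3) * (6 * Real.pi * c) ^ (1 / (6 * c)) *
    Real.exp (1 / (108 * c ^ 2))

open Real Set

namespace Real

theorem log_div_self_strictAntiOn : StrictAntiOn (fun x : ℝ ↦ log x / x) (Ici (exp 1)) := by
  intro x hex y _ hxy
  have x_pos : 0 < x := (exp_pos 1).trans_le hex
  have y_pos : 0 < y := x_pos.trans hxy
  have hlogx : 1 ≤ log x := by rwa [le_log_iff_exp_le x_pos]
  have hyx : 1 < y / x := (one_lt_div x_pos).mpr hxy
  show log y / y < log x / x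
  rw [div_lt_iff₀ y_pos, ← sub_lt_sub_iff_right (log x)]
  calc
    log y - log x = log (y / x) := by rw [log_div y_pos.ne' x_pos.ne']
    _ < y / x - 1 := log_lt_sub_one_of_pos (by positivity) hyx.ne'
    _ ≤ log x * (y / x - 1) := le_mul_of_one_le_left (by linarith) hlogx
    _ = log x / x * y - log x := by ring

theorem mul_rpow_one_div_mul_strictAntiOn {a b : ℝ} (ha : 0 < a) (hb : 0 < b) :
    StrictAntiOn (fun x : ℝ ↦ (a * x) ^ (1 / (b * x))) (Ici (exp 1 / a)) := by
  have hexp {x : ℝ} (hx : exp 1 / a ≤ x) :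
      (a * x) ^ (1 / (b * x)) = exp (a / b * (log (a * x) / (a * x))) := by
    have : 0 < x := (div_pos (exp_pos 1) ha).trans_le hx
    rw [rpow_def_of_pos (by positivity)]
    field_simp
  have hmem {x : ℝ} (hx : exp 1 / a ≤ x) : a * x ∈ Ici (exp 1) := by
    rwa [mem_Ici, ← div_le_iff₀' ha]
  intro x hx y hy hxy
  simp only [hexp hx, hexp hy]
  exact exp_lt_exp.mpr <| mul_lt_mul_of_pos_left
    (log_div_self_strictAntiOn (hmem hx) (hmem hy) (by gcongr)) (div_pos ha hb)

end Real

theorem G_strictAntiOn : StrictAntiOn G (Set.Ici (1 : ℝ)) := by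
  have hdom : Ici (1 : ℝ) ⊆ Ici (exp 1 / (6 * π)) := by
    refine Ici_subset_Ici.mpr ((div_le_one (by positivity : (0 : ℝ) < 6 * π)).mpr ?_)
    linarith [exp_one_lt_d9, pi_gt_three]
  intro x hx y hy hxy
  have hx0 : 0 < x := zero_lt_one.trans_le hx
  have hy0 : 0 < y := hx0.trans hxy
  have hpow := mul_rpow_one_div_mul_strictAntiOn (a := 6 * π) (b := 6) (by positivity)
    (by norm_num) (hdom hx) (hdom hy) hxy
  have hexp : exp (1 / (108 * y ^ 2)) < exp (1 / (108 * x ^ 2)) := by gcongr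
  unfold G
  gcongr
end
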